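/- arXiv:2010.01623 — 3 statements merged into one kernel-verified Lean document; each statement's English description precedes it below -/
import Mathlib

section
/- Let m ≥ 1 and n be natural numbers, and consider the subposet S of the product poset (Fin n → Fin (m+1)) (pointwise order) consisting of those tuples x such that for every index i with i+1 < n, if x(i+1) = 0 then x(i) = 0. Then the number of maximal chains of S, multiplied by (m!)^n · n!, equals (m·n)!. Equivalently, the number of maximal chains of S is (mn)!/((m!)^n · n!). -/
/-!
The coordinate sum grades `S`, which runs from `0` to `(m, …, m)`, so a maximal chain meets each
grade `0, …, mn` exactly once and is recorded by the word of length `mn` over `Fin n` naming the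
coordinate raised at each step. These are the words in which every letter occurs `m` times and all
prefixes stay in `S`, i.e. the first occurrences of the letters `n-1, …, 0` come in this order.
Every balanced word is `σ ∘ w` for exactly one such `w` and one permutation `σ` of the letters,
which gives the factor `n!`. Numbering the occurrences of each letter turns a balanced word into a
bijection `Fin (mn) ≃ Fin n × Fin m` in `(m!)^n` ways, and there are `(mn)!` such bijections.
-/

section Graded

open Set

variable {α : Type*} [PartialOrder α]

section GradeOrder

variable [GradeOrder ℕ α]

theorem exists_grade_eq_of_le [IsStronglyCoatomic α] {a b : α} (hab : a ≤ b) {k : ℕ}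
    (hak : grade ℕ a ≤ k) (hkb : k ≤ grade ℕ b) : ∃ c, a ≤ c ∧ c ≤ b ∧ grade ℕ c = k := by
  induction h : grade ℕ b - k generalizing b with
  | zero => exact ⟨b, hab, le_rfl, by omega⟩
  | succ d ih =>
    obtain ⟨c, hac, hcb⟩ := exists_le_covBy_of_lt (hab.lt_of_ne (by rintro rfl; omega))
    have hgrade : grade ℕ c + 1 = grade ℕ b := Nat.covBy_iff_add_one_eq.1 (hcb.grade ℕ)
    obtain ⟨e, hae, hec, he⟩ := ih hac (by omega) (by omega)
    exact ⟨e, hae, hec.trans hcb.le, he⟩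

theorem IsChain.grade_injOn {C : Set α} (hC : IsChain (· ≤ ·) C) : InjOn (grade ℕ) C := by
  intro c hc d hd h
  rcases hC.total hc hd with hcd | hdc
  · exact hcd.eq_of_not_lt fun hlt => (grade_strictMono hlt).ne h
  · exact (hdc.eq_of_not_lt fun hlt => (grade_strictMono hlt).ne h.symm).symm

def IsGradeSection {N : ℕ} (f : Fin (N + 1) → α) : Prop :=
  Monotone f ∧ ∀ k, grade ℕ (f k) = k

theorem IsGradeSection.eq_of_range_eq {N : ℕ} {f g : Fin (N + 1) → α} (hf : IsGradeSection f)
    (hg : IsGradeSection g) (h : range f = range g) : f = g := by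
  funext k
  obtain ⟨j, hj⟩ : f k ∈ range g := h ▸ mem_range_self k
  obtain rfl : j = k := Fin.ext (by rw [← hg.2 j, hj, hf.2])
  exact hj.symm

end GradeOrder

variable [BoundedOrder α] [GradeMinOrder ℕ α] {N : ℕ} {f : Fin (N + 1) → α}

theorem IsGradeSection.apply_zero (hf : IsGradeSection f) : f 0 = ⊥ := by
  have : IsMin (grade ℕ (f 0)) := by simp [hf.2]
  exact (isMin_grade_iff.1 this).eq_bot

theorem IsGradeSection.apply_last (hN : grade ℕ (⊤ : α) = N) (hf : IsGradeSection f) :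
    f (Fin.last N) = ⊤ :=
  le_top.eq_of_not_lt fun h => (grade_strictMono h).ne (by rw [hf.2, hN, Fin.val_last])

theorem IsGradeSection.isMaxChain_range (hN : grade ℕ (⊤ : α) = N) (hf : IsGradeSection f) :
    IsMaxChain (· ≤ ·) (range f) := by
  refine IsMaxChain.range_fin_of_covBy hf.apply_zero (hf.apply_last hN)
    fun k => ⟨hf.1 k.castSucc_le_succ, fun c h1 h2 => ?_⟩
  have h1 := grade_strictMono (𝕆 := ℕ) h1
  have h2 := grade_strictMono (𝕆 := ℕ) h2
  simp only [hf.2, Fin.val_castSucc, Fin.val_succ] at h1 h2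
  omega

variable [Finite α]

theorem IsMaxChain.exists_grade_eq {C : Set α} (hC : IsMaxChain (· ≤ ·) C) {k : ℕ}
    (hk : k ≤ grade ℕ (⊤ : α)) : ∃ c ∈ C, grade ℕ c = k := by
  let s := Flag.ofIsMaxChain C hC
  obtain ⟨c, -, -, hc⟩ := exists_grade_eq_of_le (bot_le : (⊥ : s) ≤ ⊤) (by simp) hk
  exact ⟨c, c.2, hc⟩

theorem IsMaxChain.exists_isGradeSection (hN : grade ℕ (⊤ : α) = N) {C : Set α}
    (hC : IsMaxChain (· ≤ ·) C) : ∃ f : Fin (N + 1) → α, IsGradeSection f ∧ range f = C := by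
  choose f hfC hf using fun k : Fin (N + 1) => hC.exists_grade_eq (k := k) (by omega)
  refine ⟨f, ⟨fun j k hjk => ?_, hf⟩, ?_⟩
  · rcases hC.isChain.total (hfC j) (hfC k) with h | h
    · exact h
    · have : (k : ℕ) ≤ j := hf k ▸ hf j ▸ grade_mono h
      rw [le_antisymm hjk this]
  · refine (range_subset_iff.2 hfC).antisymm fun c hc => ?_
    have hc_lt : grade ℕ c < N + 1 := Nat.lt_succ_of_le (hN ▸ grade_mono le_top)
    exact ⟨⟨grade ℕ c, hc_lt⟩, hC.isChain.grade_injOn (hfC _) hc (hf _)⟩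

theorem card_maxChains_eq_card_gradeSections (hN : grade ℕ (⊤ : α) = N) :
    Nat.card {C : Set α // IsMaxChain (· ≤ ·) C}
      = Nat.card {f : Fin (N + 1) → α // IsGradeSection f} := by
  refine (Nat.card_eq_of_bijective (fun f => ⟨range f.1, f.2.isMaxChain_range hN⟩)
    ⟨fun f g h => Subtype.ext (f.2.eq_of_range_eq g.2 (congrArg Subtype.val h)), ?_⟩).symm
  rintro ⟨C, hC⟩
  obtain ⟨f, hf, rfl⟩ := hC.exists_isGradeSection hN
  exact ⟨⟨f, hf⟩, rfl⟩

end Graded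

open Finset

theorem sum_add_single {ι M : Type*} [Fintype ι] [DecidableEq ι] [AddCommMonoid M] (u : ι → M)
    (i : ι) (a : M) : ∑ j, (u + Pi.single i a : ι → M) j = ∑ j, u j + a := by
  simp [sum_add_distrib]

theorem exists_eq_add_single_of_le {ι : Type*} [Fintype ι] [DecidableEq ι] {u v : ι → ℕ}
    (huv : u ≤ v) (hsum : ∑ i, v i = ∑ i, u i + 1) : ∃ i, v = u + Pi.single i 1 := by
  obtain ⟨i, hi⟩ : ∃ i, u i < v i := by
    by_contra! h
    have := sum_le_sum fun i (_ : i ∈ univ) => h i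
    omega
  have hle : u + Pi.single i 1 ≤ v := fun j => by
    rcases eq_or_ne j i with rfl | hj
    · simpa using hi
    · simpa [hj] using huv j
  have hsum' : ∑ j, (u + Pi.single i 1 : ι → ℕ) j = ∑ j, v j := by rw [sum_add_single, hsum]
  exact ⟨i, funext fun j => ((sum_eq_sum_iff_of_le fun j _ => hle j).1 hsum' j (mem_univ j)).symm⟩

theorem Fin.antitone_of_succ_le {α : Type*} [Preorder α] {n : ℕ} {f : Fin n → α}
    (h : ∀ (i : ℕ) (hi : i + 1 < n), f ⟨i + 1, hi⟩ ≤ f ⟨i, Nat.lt_of_succ_lt hi⟩) :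
    Antitone f := by
  cases n with
  | zero => exact fun i => i.elim0
  | succ n => exact Fin.antitone_iff_succ_le.2 fun i => h i i.succ.2

open Nat in
theorem Nat.card_equiv_eq_ite (α β : Type*) [Finite α] [Finite β] :
    Nat.card (α ≃ β) = if Nat.card α = Nat.card β then (Nat.card β)! else 0 := by
  split_ifs with h
  · obtain ⟨e⟩ := Finite.card_eq.1 h
    rw [Nat.card_congr (e.equivCongr (Equiv.refl β)), Nat.card_perm]
  · have : IsEmpty (α ≃ β) := ⟨fun e => h (Nat.card_congr e)⟩
    exact Nat.card_of_isEmpty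

section Words

variable {α ι : Type*} [DecidableEq ι] {m N : ℕ}

def IsBalanced [Fintype α] (m : ℕ) (w : α → ι) : Prop :=
  ∀ i, #{p | w p = i} = m

theorem IsBalanced.surjective [Fintype α] {w : α → ι} (hm : 1 ≤ m) (hb : IsBalanced m w) :
    Function.Surjective w := fun i => by
  obtain ⟨p, hp⟩ := card_pos.1 ((hb i).symm ▸ hm : 0 < #{p | w p = i})
  exact ⟨p, by simpa using hp⟩

theorem IsBalanced.perm_comp [Fintype α] {w : α → ι} (hb : IsBalanced m w) (σ : Equiv.Perm ι) :
    IsBalanced m (σ ∘ w) := fun i => by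
  simpa [Equiv.eq_symm_apply] using hb (σ.symm i)

def prefixCount (w : Fin N → ι) (k : ℕ) (i : ι) : ℕ :=
  #{p : Fin N | (p : ℕ) < k ∧ w p = i}

def firstPos (w : Fin N → ι) (i : ι) : WithTop (Fin N) :=
  (univ.filter fun p => w p = i).min

variable (w : Fin N → ι)

theorem prefixCount_zero : prefixCount w 0 = 0 := by
  funext i
  simp [prefixCount]

theorem prefixCount_succ (p : Fin N) :
    prefixCount w (p + 1) = prefixCount w p + Pi.single (w p) 1 := by
  funext i
  have : univ.filter (fun q : Fin N => (q : ℕ) < p + 1 ∧ w q = i)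
      = if w p = i then insert p (univ.filter fun q : Fin N => (q : ℕ) < p ∧ w q = i)
        else univ.filter fun q : Fin N => (q : ℕ) < p ∧ w q = i := by
    ext q
    split_ifs <;> grind
  rw [prefixCount, this]
  split_ifs with h <;> simp [prefixCount, h, eq_comm]

theorem prefixCount_of_le {k : ℕ} (hk : N ≤ k) (i : ι) : prefixCount w k i = #{p | w p = i} := by
  simp only [prefixCount]
  congr 1
  ext p
  simp only [mem_filter, mem_univ, true_and, and_iff_right_iff_imp]
  omega

theorem prefixCount_le_card (k : ℕ) (i : ι) : prefixCount w k i ≤ #{p | w p = i} :=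
  card_le_card fun p => by simp +contextual

theorem sum_prefixCount [Fintype ι] {k : ℕ} (hk : k ≤ N) : ∑ i, prefixCount w k i = k := by
  induction k with
  | zero => simp [prefixCount_zero]
  | succ k ih =>
    rw [show k + 1 = ((⟨k, hk⟩ : Fin N) : ℕ) + 1 from rfl, prefixCount_succ, sum_add_single,
      ih (by omega)]

theorem prefixCount_ne_zero_iff {k : ℕ} {i : ι} :
    prefixCount w k i ≠ 0 ↔ ∃ p : Fin N, (p : ℕ) < k ∧ w p = i := by
  simp [prefixCount]

theorem eq_of_prefixCount_eq {w w' : Fin N → ι}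
    (h : ∀ k ≤ N, prefixCount w k = prefixCount w' k) : w = w' := by
  funext p
  have := h (p + 1) p.2
  rw [prefixCount_succ, prefixCount_succ, h p p.2.le] at this
  by_contra hne
  simpa [hne] using congrFun (add_left_cancel this) (w p)

variable {w}

theorem firstPos_le_coe_iff {i : ι} {p : Fin N} : firstPos w i ≤ p ↔ ∃ q ≤ p, w q = i := by
  constructor
  · intro h
    obtain ⟨q, hq⟩ := min_of_nonempty (s := univ.filter fun p => w p = i)
      (nonempty_iff_ne_empty.2 fun he => by simp [firstPos, he] at h)
    refine ⟨q, WithTop.coe_le_coe.1 (hq ▸ h), ?_⟩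
    simpa using mem_of_min hq
  · rintro ⟨q, hqp, hq⟩
    exact (min_le (by simpa using hq)).trans (WithTop.coe_le_coe.2 hqp)

theorem firstPos_injective (hw : Function.Surjective w) : Function.Injective (firstPos w) := by
  intro i j h
  obtain ⟨p, hp⟩ := hw i
  obtain ⟨q, hq⟩ := min_of_nonempty (s := univ.filter fun p => w p = i) ⟨p, by simpa⟩
  have hi := mem_of_min hq
  have hj := mem_of_min (show firstPos w j = q from h ▸ hq)
  simp only [mem_filter, mem_univ, true_and] at hi hj
  rw [← hi, hj]

theorem firstPos_perm_comp (σ : Equiv.Perm ι) : firstPos (σ ∘ w) = firstPos w ∘ σ.symm := by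
  funext i
  simp [firstPos, Equiv.eq_symm_apply]

end Words

def IsStacked {M : Type*} [Zero M] {n : ℕ} (v : Fin n → M) : Prop :=
  ∀ (i : ℕ) (h : i + 1 < n), v ⟨i + 1, h⟩ = 0 → v ⟨i, Nat.lt_of_succ_lt h⟩ = 0

theorem IsStacked.add_single {n : ℕ} {u v : Fin n → ℕ} (hu : IsStacked u) (hv : IsStacked v)
    {i₀ : Fin n} (hi₀ : u i₀ < v i₀) (hmax : ∀ j, i₀ < j → u j = v j) :
    IsStacked (u + Pi.single i₀ 1) := by
  intro j h hz
  have hu1 : u ⟨j + 1, h⟩ = 0 := (Nat.add_eq_zero_iff.1 hz).1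
  by_cases hj : (⟨j, Nat.lt_of_succ_lt h⟩ : Fin n) = i₀
  · subst hj
    have := hv j h (hmax _ (Fin.mk_lt_mk.2 j.lt_succ_self) ▸ hu1)
    omega
  · simp [hj, hu j h hu1]

abbrev StackedPoset (m n : ℕ) : Type := {x : Fin n → Fin (m + 1) // IsStacked x}

namespace StackedPoset

variable {m n : ℕ}

def coords : StackedPoset m n ↪o (Fin n → ℕ) :=
  OrderEmbedding.ofMapLEIff (fun x i => x.1 i) fun _ _ => Iff.rfl

theorem coords_le (x : StackedPoset m n) (i : Fin n) : coords x i ≤ m :=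
  Fin.is_le (x.1 i)

theorem isStacked_coords (x : StackedPoset m n) : IsStacked (coords x) :=
  fun i h hz => congrArg Fin.val (x.2 i h (Fin.ext hz))

def ofCoords (v : Fin n → ℕ) (hle : ∀ i, v i ≤ m) (hv : IsStacked v) : StackedPoset m n :=
  ⟨fun i => ⟨v i, Nat.lt_succ_of_le (hle i)⟩, fun i h hz => Fin.ext (hv i h (congrArg Fin.val hz))⟩

@[simp]
theorem coords_ofCoords (v : Fin n → ℕ) (hle : ∀ i, v i ≤ m) (hv : IsStacked v) :
    coords (ofCoords v hle hv) = v :=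
  rfl

instance : BoundedOrder (StackedPoset m n) where
  bot := ⟨0, fun _ _ _ => rfl⟩
  bot_le x i := Fin.zero_le (x.1 i)
  top := ⟨fun _ => Fin.last m, fun _ _ h => h⟩
  le_top x i := Fin.le_last (x.1 i)

@[simp]
theorem coords_bot : coords (⊥ : StackedPoset m n) = 0 :=
  rfl

@[simp]
theorem coords_top : coords (⊤ : StackedPoset m n) = fun _ => m :=
  funext fun _ => Fin.val_last m

-- Raising the last coordinate in which `x` and `y` differ keeps the zeros an initial segment.
theorem exists_coords_eq_add_single {x y : StackedPoset m n} (hxy : x < y) :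
    ∃ z i, x < z ∧ z ≤ y ∧ coords z = coords x + Pi.single i 1 := by
  obtain ⟨hle, hex⟩ := Pi.lt_def.1 (coords.lt_iff_lt.2 hxy)
  obtain ⟨i₀, hi₀, hmax⟩ := (univ.filter fun i => coords x i < coords y i).exists_max_image id
    (by simpa [filter_nonempty_iff] using hex)
  simp only [mem_filter, mem_univ, true_and, id] at hi₀ hmax
  have hvy : coords x + Pi.single i₀ 1 ≤ coords y := fun j => by
    rcases eq_or_ne j i₀ with rfl | hj
    · simpa using hi₀
    · simpa [hj] using hle j
  have hv : IsStacked (coords x + Pi.single i₀ 1) :=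
    (isStacked_coords x).add_single (isStacked_coords y) hi₀
      fun j hj => (hle j).eq_of_not_lt fun h => (hmax j h).not_gt hj
  refine ⟨ofCoords _ (fun i => (hvy i).trans (coords_le y i)) hv, i₀, ?_,
    coords.le_iff_le.1 hvy, rfl⟩
  exact coords.lt_iff_lt.1 (Pi.lt_def.2 ⟨le_self_add, i₀, by simp⟩)

instance : GradeMinOrder ℕ (StackedPoset m n) where
  grade x := ∑ i, coords x i
  grade_strictMono x y h := by
    obtain ⟨hle, i, hi⟩ := Pi.lt_def.1 (coords.lt_iff_lt.2 h)
    exact sum_lt_sum (fun i _ => hle i) ⟨i, mem_univ i, hi⟩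
  covBy_grade x y h := by
    obtain ⟨z, i, hxz, hzy, hz⟩ := exists_coords_eq_add_single h.lt
    obtain rfl := hzy.eq_of_not_lt (h.2 hxz)
    exact Nat.covBy_iff_add_one_eq.2 (by rw [hz, sum_add_single])
  isMin_grade x hx := by
    rw [hx.eq_bot]
    simp

theorem grade_eq_sum (x : StackedPoset m n) : grade ℕ x = ∑ i, coords x i :=
  rfl

theorem grade_top : grade ℕ (⊤ : StackedPoset m n) = m * n := by
  simp [grade_eq_sum, mul_comm]

end StackedPoset

section StackedWords

open StackedPoset

variable {m n N : ℕ}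

def IsStackedWord (w : Fin N → Fin n) : Prop :=
  ∀ k ≤ N, IsStacked (prefixCount w k)

variable {w : Fin N → Fin n}

def wordPath (hb : IsBalanced m w) (hs : IsStackedWord w) (k : Fin (N + 1)) : StackedPoset m n :=
  ofCoords (prefixCount w k) (fun i => hb i ▸ prefixCount_le_card w k i)
    (hs k (Nat.lt_succ_iff.1 k.2))

theorem isGradeSection_wordPath (hb : IsBalanced m w) (hs : IsStackedWord w) :
    IsGradeSection (wordPath hb hs) := by
  refine ⟨Fin.monotone_iff_le_succ.2 fun p => ?_, fun k => ?_⟩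
  · rw [← coords.le_iff_le]
    simp [wordPath, prefixCount_succ w p]
  · simp [wordPath, grade_eq_sum, sum_prefixCount w (Nat.lt_succ_iff.1 k.2)]

theorem card_gradeSections_eq_card_stackedWords :
    Nat.card {f : Fin (m * n + 1) → StackedPoset m n // IsGradeSection f}
      = Nat.card {w : Fin (m * n) → Fin n // IsBalanced m w ∧ IsStackedWord w} := by
  refine (Nat.card_eq_of_bijective (fun w => ⟨wordPath w.2.1 w.2.2, isGradeSection_wordPath _ _⟩)
    ⟨fun w w' h => Subtype.ext (eq_of_prefixCount_eq fun k hk => ?_), fun ⟨f, hf⟩ => ?_⟩).symm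
  · simpa [wordPath] using congrArg (fun f => coords (f.1 ⟨k, Nat.lt_succ_of_le hk⟩)) h
  · have hstep (p : Fin (m * n)) : ∃ i, coords (f p.succ) = coords (f p.castSucc) + Pi.single i 1 :=
      exists_eq_add_single_of_le (coords.monotone (hf.1 p.castSucc_le_succ))
        (by simp only [← grade_eq_sum, hf.2, Fin.val_succ, Fin.val_castSucc])
    choose w hw using hstep
    have hcount (k : Fin (m * n + 1)) : prefixCount w k = coords (f k) := by
      induction k using Fin.induction with
      | zero => simp [prefixCount_zero, hf.apply_zero]
      | succ p ih => rw [Fin.val_succ, prefixCount_succ, hw, ← ih, Fin.val_castSucc]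
    have hb : IsBalanced m w := fun i => by
      have := hcount (Fin.last _)
      rw [Fin.val_last, hf.apply_last grade_top, coords_top] at this
      rw [← prefixCount_of_le w le_rfl, this]
    have hs : IsStackedWord w := fun k hk => hcount ⟨k, Nat.lt_succ_of_le hk⟩ ▸ isStacked_coords _
    exact ⟨⟨w, hb, hs⟩, Subtype.ext (funext fun k => coords.injective (by simp [wordPath, hcount]))⟩

theorem isStackedWord_iff_antitone_firstPos : IsStackedWord w ↔ Antitone (firstPos w) := by
  refine ⟨fun hs => Fin.antitone_of_succ_le fun j h => ?_, fun ha k _ j h hz => ?_⟩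
  · refine Finset.le_min fun p hp => ?_
    simp only [mem_filter, mem_univ, true_and] at hp
    have hne : prefixCount w (p + 1) ⟨j, Nat.lt_of_succ_lt h⟩ ≠ 0 :=
      (prefixCount_ne_zero_iff w).2 ⟨p, Nat.lt_succ_self _, hp⟩
    obtain ⟨q, hq, hwq⟩ := (prefixCount_ne_zero_iff w).1 (mt (hs (p + 1) p.2 j h) hne)
    exact firstPos_le_coe_iff.2 ⟨q, Nat.lt_succ_iff.1 hq, hwq⟩
  · by_contra hne
    obtain ⟨p, hpk, hp⟩ := (prefixCount_ne_zero_iff w).1 hne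
    have hle : firstPos w ⟨j + 1, h⟩ ≤ p :=
      (ha (Fin.mk_le_mk.2 j.le_succ)).trans (min_le (by simpa using hp))
    obtain ⟨q, hqp, hq⟩ := firstPos_le_coe_iff.1 hle
    exact (prefixCount_ne_zero_iff w).2 ⟨q, lt_of_le_of_lt hqp hpk, hq⟩ hz

theorem card_stackedWords_mul_factorial (hm : 1 ≤ m) :
    Nat.card {w : Fin N → Fin n // IsBalanced m w ∧ IsStackedWord w} * n.factorial
      = Nat.card {u : Fin N → Fin n // IsBalanced m u} := by
  suffices Nat.card ({w : Fin N → Fin n // IsBalanced m w ∧ IsStackedWord w} × Equiv.Perm (Fin n))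
      = Nat.card {u : Fin N → Fin n // IsBalanced m u} by
    rwa [Nat.card_prod, Nat.card_perm, Nat.card_fin] at this
  refine Nat.card_eq_of_bijective (fun x => ⟨x.2 ∘ x.1.1, x.1.2.1.perm_comp x.2⟩)
    ⟨fun ⟨⟨w, hb, hs⟩, σ⟩ ⟨⟨w', _, hs'⟩, σ'⟩ h => ?_, fun ⟨u, hb⟩ => ?_⟩
  · have hu : σ ∘ w = σ' ∘ w' := congrArg Subtype.val h
    have hf : firstPos (σ ∘ w) ∘ σ = firstPos w := by
      rw [firstPos_perm_comp, Function.comp_assoc, Equiv.symm_comp_self, Function.comp_id]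
    have hf' : firstPos (σ ∘ w) ∘ σ' = firstPos w' := by
      rw [hu, firstPos_perm_comp, Function.comp_assoc, Equiv.symm_comp_self, Function.comp_id]
    have hσ : firstPos (σ ∘ w) ∘ σ = firstPos (σ ∘ w) ∘ σ' := Tuple.unique_antitone
      (hf ▸ isStackedWord_iff_antitone_firstPos.1 hs)
      (hf' ▸ isStackedWord_iff_antitone_firstPos.1 hs')
    obtain rfl : σ = σ' := Equiv.ext fun i =>
      firstPos_injective ((hb.perm_comp σ).surjective hm) (congrFun hσ i)
    obtain rfl : w = w' := funext fun p => σ.injective (congrFun hu p)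
    rfl
  · set ρ := Tuple.sort (OrderDual.toDual ∘ firstPos u)
    have hs : IsStackedWord (ρ.symm ∘ u) := by
      rw [isStackedWord_iff_antitone_firstPos, firstPos_perm_comp, Equiv.symm_symm]
      exact monotone_toDual_comp_iff.1 (Tuple.monotone_sort (OrderDual.toDual ∘ firstPos u))
    refine ⟨⟨⟨ρ.symm ∘ u, hb.perm_comp _, hs⟩, ρ⟩, Subtype.ext (funext fun p => ?_)⟩
    simp

end StackedWords

section BalancedWords

variable {α β γ : Type*}

def fstFiberEquiv (u : α → β) :
    {e : α ≃ β × γ // Prod.fst ∘ e = u} ≃ ∀ b, ({a // u a = b} ≃ γ) where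
  toFun e b :=
    { toFun := fun a => (e.1 a).2
      invFun := fun c => ⟨e.1.symm (b, c), by rw [← congrFun e.2]; simp⟩
      left_inv := fun ⟨a, ha⟩ => Subtype.ext <| e.1.symm_apply_eq.2 <|
        Prod.ext (ha ▸ (congrFun e.2 a).symm) rfl
      right_inv := fun c => by simp }
  invFun F := ⟨(Equiv.sigmaFiberEquiv u).symm.trans
      ((Equiv.sigmaCongrRight F).trans (Equiv.sigmaEquivProd β γ)), rfl⟩
  left_inv e := by
    ext a
    · exact (congrFun e.2 a).symm
    · rfl
  right_inv F := by
    ext b ⟨a, rfl⟩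
    rfl

variable [Fintype α] [Fintype β] [Fintype γ] [DecidableEq β]

open Classical in
theorem card_fstFiber (u : α → β) :
    Nat.card {e : α ≃ β × γ // Prod.fst ∘ e = u}
      = if IsBalanced (Nat.card γ) u then (Nat.card γ).factorial ^ Nat.card β else 0 := by
  rw [Nat.card_congr (fstFiberEquiv u), Nat.card_pi]
  have hcard (b : β) : Nat.card {a // u a = b} = #{a | u a = b} := by
    rw [Nat.card_eq_fintype_card, Fintype.card_subtype]
  simp only [Nat.card_equiv_eq_ite, hcard, Fintype.prod_ite_zero, prod_const, card_univ,
    ← Nat.card_eq_fintype_card, IsBalanced]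
  congr

theorem card_balanced_mul_factorial_pow :
    Nat.card {u : α → β // IsBalanced (Nat.card γ) u} * (Nat.card γ).factorial ^ Nat.card β
      = Nat.card (α ≃ β × γ) := by
  classical
  rw [← Nat.card_congr (Equiv.sigmaFiberEquiv fun e : α ≃ β × γ => Prod.fst ∘ e), Nat.card_sigma]
  simp only [card_fstFiber]
  rw [sum_ite, sum_const_zero, add_zero, sum_const, smul_eq_mul, Nat.card_eq_fintype_card,
    Fintype.card_subtype]

end BalancedWords

/-- The number of maximal chains in the stacked lattice `Σ_n C_{m-1}^n` (for `m ≥ 1`),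
represented as the subposet of `Fin n → Fin (m+1)` (pointwise order) of tuples `x`
such that `x (i+1) = 0 → x i = 0`, is `(mn)!/((m!)^n · n!)`. -/
theorem stmt_1 (m n : ℕ) (hm : 1 ≤ m) :
    Nat.card {C : Set {x : Fin n → Fin (m + 1) //
        ∀ (i : ℕ) (h : i + 1 < n), x ⟨i + 1, h⟩ = 0 → x ⟨i, Nat.lt_of_succ_lt h⟩ = 0} //
      IsMaxChain (· ≤ ·) C} * (Nat.factorial m ^ n * Nat.factorial n)
      = Nat.factorial (m * n) := by
  have hchains : Nat.card {C : Set (StackedPoset m n) // IsMaxChain (· ≤ ·) C}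
      = Nat.card {w : Fin (m * n) → Fin n // IsBalanced m w ∧ IsStackedWord w} :=
    (card_maxChains_eq_card_gradeSections StackedPoset.grade_top).trans
      card_gradeSections_eq_card_stackedWords
  have hwords := card_stackedWords_mul_factorial (N := m * n) (n := n) hm
  have hbalanced := card_balanced_mul_factorial_pow (α := Fin (m * n)) (β := Fin n) (γ := Fin m)
  rw [Nat.card_equiv_eq_ite, Nat.card_prod] at hbalanced
  simp only [Nat.card_fin, mul_comm n m, if_true] at hbalanced
  change Nat.card {C : Set (StackedPoset m n) // IsMaxChain (· ≤ ·) C} * _ = _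
  rw [hchains, ← hbalanced, ← hwords]
  ring
end

section
/- Let n and m be natural numbers. Consider the subposet T of the product poset (Fin (n+1) → Fin (m+1)) (pointwise order) consisting of those tuples x with x(i) ≤ x(n) for every i < n. Then the number of maximal chains of T equals the number of walks p : Fin ((n+1)·m + 1) → (Fin n → Fin (m+1)) such that p(0) is the zero tuple, p((n+1)·m) is the zero tuple, and for every step t, either (p(t+1))(i) = (p(t))(i) + 1 for all i ∈ Fin n (a diagonal (1,1,...,1) step), or there exists a single coordinate i₀ with (p(t+1))(i₀) + 1 = (p(t))(i₀) and (p(t+1))(i) = (p(t))(i) for all i ≠ i₀ (a step of −1 in one coordinate). -/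
/-!
Grading the stack by the coordinate sum makes a maximal chain of it the same as a sequence
`x₀ ≤ x₁ ≤ ⋯ ≤ x_{(n+1)m}` with `x_t` of grade `t`, in which each step raises a single coordinate
by one. Reading a point `x` as `(x_n - x_i)_{i<n}`, raising the last coordinate is the diagonal step
`(1,…,1)` and raising `x_i` is the step `-e_i`, so these sequences become the walks. A point is
recovered from its image and its grade, because `grade x + ∑ i, (x_n - x_i) = (n+1) x_n`.
-/

open Set

section Graded

variable {𝕆 α : Type*} [Preorder 𝕆] [PartialOrder α] [GradeOrder 𝕆 α] {a b : α}

theorem eq_of_le_of_grade_le (hab : a ≤ b) (h : grade 𝕆 b ≤ grade 𝕆 a) : a = b :=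
  hab.eq_of_not_lt fun hlt => (grade_strictMono hlt).not_ge h

theorem IsChain.le_of_grade_le {s : Set α} (hs : IsChain (· ≤ ·) s) (ha : a ∈ s) (hb : b ∈ s)
    (h : grade 𝕆 a ≤ grade 𝕆 b) : a ≤ b :=
  (hs.total ha hb).elim id fun hba => (eq_of_le_of_grade_le hba h).ge

theorem IsChain.eq_of_grade_eq {s : Set α} (hs : IsChain (· ≤ ·) s) (ha : a ∈ s) (hb : b ∈ s)
    (h : grade 𝕆 a = grade 𝕆 b) : a = b :=
  (hs.le_of_grade_le ha hb h.le).antisymm (hs.le_of_grade_le hb ha h.ge)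

end Graded

def Flag.equivIsMaxChain {α : Type*} [LE α] : Flag α ≃ {s : Set α // IsMaxChain (· ≤ ·) s} where
  toFun s := ⟨s, s.maxChain⟩
  invFun s := .ofIsMaxChain s.1 s.2
  left_inv _ := rfl
  right_inv _ := rfl

section NatGraded

variable {α : Type*} [PartialOrder α] [BoundedOrder α] [GradeMinOrder ℕ α]

theorem Flag.exists_mem_grade_eq (s : Flag α) {k : ℕ} (hk : k ≤ grade ℕ (⊤ : α)) :
    ∃ a ∈ s, grade ℕ a = k := by
  induction k with
  | zero => exact ⟨⊥, s.bot_mem, grade_bot⟩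
  | succ k ih =>
    obtain ⟨a, ha, rfl⟩ := ih (by omega)
    have hlt : (⟨a, ha⟩ : s) < ⊤ := lt_top_iff_ne_top.2 fun h => by
      rw [show a = ⊤ from congrArg Subtype.val h] at hk
      omega
    obtain ⟨b, hab, -⟩ := exists_covBy_le_of_lt hlt
    exact ⟨b, b.2, (Nat.covBy_iff_add_one_eq.1 (hab.grade ℕ)).symm⟩

variable {N : ℕ} (hN : grade ℕ (⊤ : α) = N)
include hN

theorem grade_lt_succ (a : α) : grade ℕ a < N + 1 :=
  hN ▸ Nat.lt_succ_of_le (grade_mono le_top)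

theorem isMaxChain_range_of_grade_eq {f : Fin (N + 1) → α} (hf : Monotone f)
    (hgf : ∀ t, grade ℕ (f t) = t) : IsMaxChain (· ≤ ·) (range f) :=
  ⟨hf.isChain_range, fun _ hD hfD => hfD.antisymm fun w hw =>
    ⟨⟨grade ℕ w, grade_lt_succ hN w⟩, hD.eq_of_grade_eq (𝕆 := ℕ) (hfD ⟨_, rfl⟩) hw (hgf _)⟩⟩

theorem Flag.exists_mem_grade_eq_fin (s : Flag α) (t : Fin (N + 1)) : ∃ a ∈ s, grade ℕ a = t :=
  s.exists_mem_grade_eq (by have := t.2; omega)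

noncomputable def Flag.elemOfGrade (s : Flag α) (t : Fin (N + 1)) : α :=
  (s.exists_mem_grade_eq_fin hN t).choose

theorem Flag.elemOfGrade_mem (s : Flag α) (t : Fin (N + 1)) : s.elemOfGrade hN t ∈ s :=
  (s.exists_mem_grade_eq_fin hN t).choose_spec.1

theorem Flag.grade_elemOfGrade (s : Flag α) (t : Fin (N + 1)) :
    grade ℕ (s.elemOfGrade hN t) = t :=
  (s.exists_mem_grade_eq_fin hN t).choose_spec.2

noncomputable def Flag.equivGradedFin :
    Flag α ≃ {f : Fin (N + 1) → α // Monotone f ∧ ∀ t, grade ℕ (f t) = t} where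
  toFun s := ⟨s.elemOfGrade hN,
    fun t u htu => s.chain_le.le_of_grade_le (𝕆 := ℕ) (s.elemOfGrade_mem hN t)
      (s.elemOfGrade_mem hN u) (by rwa [s.grade_elemOfGrade, s.grade_elemOfGrade]),
    s.grade_elemOfGrade hN⟩
  invFun f := .ofIsMaxChain (range f.1) (isMaxChain_range_of_grade_eq hN f.2.1 f.2.2)
  left_inv s := Flag.ext <| Subset.antisymm (range_subset_iff.2 (s.elemOfGrade_mem hN))
    fun a ha => ⟨⟨grade ℕ a, grade_lt_succ hN a⟩, s.chain_le.eq_of_grade_eq (𝕆 := ℕ)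
      (s.elemOfGrade_mem hN _) ha (s.grade_elemOfGrade hN _)⟩
  right_inv f := Subtype.ext <| funext fun t =>
    (Flag.chain_le _).eq_of_grade_eq (𝕆 := ℕ) (Flag.elemOfGrade_mem hN _ t) ⟨t, rfl⟩
      ((Flag.grade_elemOfGrade hN _ t).trans (f.2.2 t).symm)

end NatGraded

/-- `x (Fin.last n)` is the level `k` of the copy of `C_k^n` containing `x`; the other coordinates
form the point of `{0,…,k}^n`. -/
abbrev CubeStack (n m : ℕ) := {x : Fin (n + 1) → Fin (m + 1) //
    ∀ i : Fin (n + 1), (i : ℕ) < n → x i ≤ x ⟨n, Nat.lt_succ_self n⟩}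

namespace CubeStack

variable {n m : ℕ}

theorem forall_le_last_iff {x : Fin (n + 1) → Fin (m + 1)} :
    (∀ i : Fin (n + 1), (i : ℕ) < n → x i ≤ x ⟨n, Nat.lt_succ_self n⟩) ↔
      ∀ i, x i ≤ x (Fin.last n) :=
  ⟨fun h i => if hi : (i : ℕ) < n then h i hi
    else (congrArg x (Fin.ext (by rw [Fin.val_last]; omega))).le, fun h i _ => h i⟩

theorem le_last (x : CubeStack n m) (i : Fin (n + 1)) : x.1 i ≤ x.1 (Fin.last n) :=
  forall_le_last_iff.1 x.2 i

instance : BoundedOrder (CubeStack n m) :=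
  Subtype.boundedOrder (fun _ _ => le_rfl) (fun _ _ => le_rfl)

@[simp] theorem coe_bot : ((⊥ : CubeStack n m) : Fin (n + 1) → Fin (m + 1)) = ⊥ := rfl

@[simp] theorem coe_top : ((⊤ : CubeStack n m) : Fin (n + 1) → Fin (m + 1)) = ⊤ := rfl

theorem exists_coord_lt_of_lt {x y : CubeStack n m} (h : x < y) :
    ∃ j, x.1 j < y.1 j ∧ (j = Fin.last n ∨ x.1 j < x.1 (Fin.last n)) := by
  by_cases hlast : x.1 (Fin.last n) < y.1 (Fin.last n)
  · exact ⟨_, hlast, .inl rfl⟩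
  · obtain ⟨j, hj⟩ := Pi.lt_def.1 (Subtype.coe_lt_coe.2 h) |>.2
    exact ⟨j, hj, .inr (hj.trans_le ((y.le_last j).trans (not_lt.1 hlast)))⟩

/-- Raising the coordinate given by `exists_coord_lt_of_lt` by one stays in the stack and below
`y`, so it gives `y`. -/
theorem exists_eq_add_single_of_covBy {x y : CubeStack n m} (h : x ⋖ y) :
    ∃ j, ∀ i, (y.1 i : ℕ) = x.1 i + if i = j then 1 else 0 := by
  obtain ⟨j, hxy, hj⟩ := exists_coord_lt_of_lt h.lt
  let z : CubeStack n m := ⟨fun i => ⟨x.1 i + if i = j then 1 else 0, by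
    have := (y.1 j).2; split_ifs with hij <;> [(subst hij; omega); omega]⟩, by
    refine forall_le_last_iff.2 fun i => Fin.le_def.2 ?_
    have := Fin.le_def.1 (x.le_last i)
    dsimp only
    rcases hj with rfl | hj
    · split_ifs <;> omega
    · have := Fin.lt_def.1 hj
      split_ifs <;> subst_vars <;> omega⟩
  have hxz : x < z := Subtype.coe_lt_coe.1 <| Pi.lt_def.2
    ⟨fun i => Fin.le_def.2 (Nat.le_add_right _ _), j, Fin.lt_def.2 (by simp [z])⟩
  have hzy : z ≤ y := fun i => Fin.le_def.2 <| by
    have := Fin.le_def.1 (h.le i)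
    have := Fin.lt_def.1 hxy
    dsimp only [z]
    split_ifs with hij <;> [(subst hij; omega); omega]
  exact ⟨j, fun i => by rw [← (h.eq_or_eq hxz.le hzy).resolve_left hxz.ne']⟩

instance : GradeMinOrder ℕ (CubeStack n m) where
  grade x := ∑ i, (x.1 i : ℕ)
  grade_strictMono x y h := by
    obtain ⟨hle, j, hj⟩ := Pi.lt_def.1 (Subtype.coe_lt_coe.2 h)
    exact Finset.sum_lt_sum (fun i _ => hle i) ⟨j, Finset.mem_univ j, hj⟩
  covBy_grade x y h := by
    obtain ⟨j, hj⟩ := exists_eq_add_single_of_covBy h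
    simp [hj, Finset.sum_add_distrib]
  isMin_grade x h := by
    rw [h.eq_bot]
    simp [bot_eq_zero]

theorem grade_eq (x : CubeStack n m) : grade ℕ x = ∑ i, (x.1 i : ℕ) := rfl

theorem grade_top : grade ℕ (⊤ : CubeStack n m) = (n + 1) * m := by
  simp [grade_eq, mul_comm]

def toGrid (x : CubeStack n m) (i : Fin n) : Fin (m + 1) := x.1 (Fin.last n) - x.1 i.castSucc

theorem val_toGrid (x : CubeStack n m) (i : Fin n) :
    (toGrid x i : ℕ) = x.1 (Fin.last n) - x.1 i.castSucc :=
  Fin.sub_val_of_le (x.le_last _)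

@[simp] theorem toGrid_bot : toGrid (⊥ : CubeStack n m) = 0 := by
  ext i; simp [toGrid]

@[simp] theorem toGrid_top : toGrid (⊤ : CubeStack n m) = 0 := by
  ext i; simp [toGrid]

theorem grade_add_sum_toGrid (x : CubeStack n m) :
    grade ℕ x + ∑ i, (toGrid x i : ℕ) = (n + 1) * x.1 (Fin.last n) := by
  have hsum : ∑ i : Fin n, ((x.1 i.castSucc : ℕ) + toGrid x i) = n * x.1 (Fin.last n) := by
    simp [val_toGrid, Nat.add_sub_cancel' (Fin.le_def.1 (x.le_last _))]
  rw [Finset.sum_add_distrib] at hsum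
  rw [grade_eq, Fin.sum_univ_castSucc]
  linarith

def ofGrid (s : Fin (m + 1)) (a : Fin n → Fin (m + 1)) (h : ∀ i, a i ≤ s) : CubeStack n m :=
  ⟨Fin.snoc (fun i => s - a i) s, forall_le_last_iff.2 <| Fin.lastCases (by simp) fun i => by
    simp only [Fin.snoc_castSucc, Fin.snoc_last, Fin.le_def, Fin.sub_val_of_le (h i)]
    exact Nat.sub_le _ _⟩

section OfGrid

variable {s : Fin (m + 1)} {a : Fin n → Fin (m + 1)} {h : ∀ i, a i ≤ s}

@[simp] theorem ofGrid_last : (ofGrid s a h).1 (Fin.last n) = s := by simp [ofGrid]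

theorem val_ofGrid_castSucc (i : Fin n) : ((ofGrid s a h).1 i.castSucc : ℕ) = s - a i := by
  simp [ofGrid, Fin.sub_val_of_le (h i)]

@[simp] theorem toGrid_ofGrid : toGrid (ofGrid s a h) = a := by
  ext i; simp [toGrid, ofGrid]

theorem ofGrid_toGrid {x : CubeStack n m} {h : ∀ i, toGrid x i ≤ s} (hs : s = x.1 (Fin.last n)) :
    ofGrid s (toGrid x) h = x := by
  subst hs
  ext j : 2
  induction j using Fin.lastCases <;> simp [ofGrid, toGrid]

end OfGrid

def IsWalkStep (a b : Fin n → Fin (m + 1)) : Prop :=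
  (∀ i, (b i : ℕ) = a i + 1) ∨ ∃ i₀, (b i₀ : ℕ) + 1 = a i₀ ∧ ∀ i, i ≠ i₀ → b i = a i

def IsWalk {L : ℕ} (p : Fin (L + 1) → Fin n → Fin (m + 1)) : Prop :=
  p 0 = 0 ∧ p (Fin.last L) = 0 ∧ ∀ t : Fin L, IsWalkStep (p t.castSucc) (p t.succ)

theorem isWalkStep_toGrid_of_covBy {x y : CubeStack n m} (hxy : x ⋖ y) :
    IsWalkStep (toGrid x) (toGrid y) := by
  obtain ⟨j, hj⟩ := exists_eq_add_single_of_covBy hxy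
  induction j using Fin.lastCases with
  | last =>
    refine .inl fun i => ?_
    have := Fin.le_def.1 (x.le_last i.castSucc)
    simp only [val_toGrid, hj, ↓reduceIte, Fin.castSucc_ne_last, add_zero]
    omega
  | cast i₀ =>
    have hlast : (y.1 (Fin.last n) : ℕ) = x.1 (Fin.last n) := by
      simp [hj, (Fin.castSucc_ne_last i₀).symm]
    refine .inr ⟨i₀, ?_, fun i hi => Fin.ext ?_⟩
    · have := Fin.le_def.1 (y.le_last i₀.castSucc)
      have hi₀ := hj i₀.castSucc
      rw [if_pos rfl] at hi₀
      rw [val_toGrid, val_toGrid, hlast]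
      omega
    · simp [val_toGrid, hlast, hj, hi]

theorem IsWalkStep.eq_add_one_or_le {a b : Fin n → Fin (m + 1)} (h : IsWalkStep a b) :
    ((∀ i, (b i : ℕ) = a i + 1) ∧ ∑ i, (b i : ℕ) = ∑ i, (a i : ℕ) + n) ∨
      ((∀ i, (b i : ℕ) ≤ a i) ∧ ∑ i, (b i : ℕ) + 1 = ∑ i, (a i : ℕ)) := by
  rcases h with hdiag | ⟨i₀, hi₀, hrest⟩
  · exact .inl ⟨hdiag, by simp [hdiag, Finset.sum_add_distrib]⟩
  · have hab : ∀ i, (a i : ℕ) = b i + if i = i₀ then 1 else 0 := fun i => by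
      by_cases hi : i = i₀
      · subst hi; rw [if_pos rfl]; omega
      · simp [hi, hrest i hi]
    refine .inr ⟨fun i => by rw [hab i]; omega, ?_⟩
    simp [hab, Finset.sum_add_distrib]

section Walk

variable {L : ℕ} {p : Fin (L + 1) → Fin n → Fin (m + 1)}

/-- The level of the point of grade `t` of the stack lying over `p t`, solved from
`grade_add_sum_toGrid`. -/
def level (p : Fin (L + 1) → Fin n → Fin (m + 1)) (t : Fin (L + 1)) : ℕ :=
  (t + ∑ i, (p t i : ℕ)) / (n + 1)

theorem level_eq_of_mul_eq {t : Fin (L + 1)} {h : ℕ} (hh : (n + 1) * h = t + ∑ i, (p t i : ℕ)) :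
    level p t = h := by
  rw [level, ← hh, Nat.mul_div_cancel_left _ n.succ_pos]

theorem IsWalk.mul_level (hp : IsWalk p) (t : Fin (L + 1)) :
    (n + 1) * level p t = t + ∑ i, (p t i : ℕ) := by
  induction t using Fin.induction with
  | zero => simp [level, hp.1]
  | succ t ih =>
    rw [Fin.val_castSucc] at ih
    rcases (hp.2.2 t).eq_add_one_or_le with ⟨-, hsum⟩ | ⟨-, hsum⟩
    · have hh : (n + 1) * (level p t.castSucc + 1) = t.succ + ∑ i, (p t.succ i : ℕ) := by
        rw [Fin.val_succ]; linarith
      rwa [level_eq_of_mul_eq hh]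
    · have hh : (n + 1) * level p t.castSucc = t.succ + ∑ i, (p t.succ i : ℕ) := by
        rw [Fin.val_succ]; linarith
      rwa [level_eq_of_mul_eq hh]

theorem IsWalk.level_succ (hp : IsWalk p) (t : Fin L) :
    (level p t.succ = level p t.castSucc + 1 ∧ ∀ i, (p t.succ i : ℕ) = p t.castSucc i + 1) ∨
      (level p t.succ = level p t.castSucc ∧ ∀ i, (p t.succ i : ℕ) ≤ p t.castSucc i) := by
  have h₁ := hp.mul_level t.succ
  have h₀ := hp.mul_level t.castSucc
  simp only [Fin.val_succ, Fin.val_castSucc] at h₀ h₁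
  rcases (hp.2.2 t).eq_add_one_or_le with ⟨hstep, hsum⟩ | ⟨hstep, hsum⟩
  · exact .inl ⟨Nat.eq_of_mul_eq_mul_left n.succ_pos (by linarith), hstep⟩
  · exact .inr ⟨Nat.eq_of_mul_eq_mul_left n.succ_pos (by linarith), hstep⟩

theorem IsWalk.le_level (hp : IsWalk p) (t : Fin (L + 1)) (i : Fin n) :
    (p t i : ℕ) ≤ level p t := by
  induction t using Fin.induction with
  | zero => simp [hp.1]
  | succ t ih => rcases hp.level_succ t with ⟨h, hi⟩ | ⟨h, hi⟩ <;> have := hi i <;> omega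

theorem IsWalk.monotone_level (hp : IsWalk p) : Monotone (level p) :=
  Fin.monotone_iff_le_succ.2 fun t => by rcases hp.level_succ t with ⟨h, -⟩ | ⟨h, -⟩ <;> omega

end Walk

theorem IsWalk.level_le {p : Fin ((n + 1) * m + 1) → Fin n → Fin (m + 1)} (hp : IsWalk p)
    (t : Fin ((n + 1) * m + 1)) : level p t ≤ m := by
  have hlast : level p (Fin.last _) = m := level_eq_of_mul_eq (by simp [hp.2.1])
  exact (hp.monotone_level (Fin.le_last t)).trans_eq hlast

section Equiv

variable {p : Fin ((n + 1) * m + 1) → Fin n → Fin (m + 1)}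

def ofWalk (hp : IsWalk p) (t : Fin ((n + 1) * m + 1)) : CubeStack n m :=
  ofGrid ⟨level p t, Nat.lt_succ_of_le (hp.level_le t)⟩ (p t) fun i =>
    Fin.le_def.2 (hp.le_level t i)

@[simp] theorem toGrid_ofWalk (hp : IsWalk p) (t : Fin ((n + 1) * m + 1)) :
    toGrid (ofWalk hp t) = p t :=
  toGrid_ofGrid

theorem ofWalk_last (hp : IsWalk p) (t : Fin ((n + 1) * m + 1)) :
    ((ofWalk hp t).1 (Fin.last n) : ℕ) = level p t := by
  simp [ofWalk]

theorem grade_ofWalk (hp : IsWalk p) (t : Fin ((n + 1) * m + 1)) :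
    grade ℕ (ofWalk hp t) = t := by
  have := grade_add_sum_toGrid (ofWalk hp t)
  rw [toGrid_ofWalk, ofWalk_last, hp.mul_level] at this
  omega

theorem monotone_ofWalk (hp : IsWalk p) : Monotone (ofWalk hp) := by
  refine Fin.monotone_iff_le_succ.2 fun t j => ?_
  induction j using Fin.lastCases with
  | last => simpa [ofWalk, Fin.le_def] using hp.monotone_level t.castSucc_le_succ
  | cast i =>
    simp only [ofWalk, Fin.le_def, val_ofGrid_castSucc]
    rcases hp.level_succ t with ⟨h, hi⟩ | ⟨h, hi⟩ <;> have := hi i <;> omega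

theorem isWalk_toGrid_comp {f : Fin ((n + 1) * m + 1) → CubeStack n m} (hf : Monotone f)
    (hgf : ∀ t, grade ℕ (f t) = t) : IsWalk (toGrid ∘ f) := by
  refine ⟨?_, ?_, fun t => isWalkStep_toGrid_of_covBy ?_⟩
  · have h0 : ⊥ = f 0 := eq_of_le_of_grade_le (𝕆 := ℕ) bot_le (by simp [hgf])
    simp [← h0]
  · have hN : f (Fin.last _) = ⊤ :=
      eq_of_le_of_grade_le (𝕆 := ℕ) le_top (by simp [hgf, grade_top])
    simp [hN]
  · have hgrade : grade ℕ (f t.castSucc) ⋖ grade ℕ (f t.succ) := by simp [hgf]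
    exact covBy_iff_lt_covBy_grade.2
      ⟨(hf t.castSucc_le_succ).lt_of_ne fun h => hgrade.ne (by rw [h]), hgrade⟩

theorem ofWalk_toGrid_comp {f : Fin ((n + 1) * m + 1) → CubeStack n m} (hf : Monotone f)
    (hgf : ∀ t, grade ℕ (f t) = t) (t : Fin ((n + 1) * m + 1)) :
    ofWalk (isWalk_toGrid_comp hf hgf) t = f t := by
  refine ofGrid_toGrid (Fin.ext (level_eq_of_mul_eq ?_))
  simp [← grade_add_sum_toGrid, hgf]

def gradedFinEquivWalk :
    {f : Fin ((n + 1) * m + 1) → CubeStack n m // Monotone f ∧ ∀ t, grade ℕ (f t) = t} ≃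
      {p : Fin ((n + 1) * m + 1) → Fin n → Fin (m + 1) // IsWalk p} where
  toFun f := ⟨toGrid ∘ f.1, isWalk_toGrid_comp f.2.1 f.2.2⟩
  invFun p := ⟨ofWalk p.2, monotone_ofWalk p.2, grade_ofWalk p.2⟩
  left_inv f := Subtype.ext <| funext <| ofWalk_toGrid_comp f.2.1 f.2.2
  right_inv p := Subtype.ext <| funext <| toGrid_ofWalk p.2

end Equiv

end CubeStack

/-- The number of maximal chains of the subposet of `Fin (n+1) → Fin (m+1)` of tuples
with `x i ≤ x n` for all `i < n` (the representation of `Σ_m C_m^n`) equals the number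
of lattice walks of length `(n+1)·m` in `{0,…,m}^n` starting and ending at the origin
and using only the steps `(1,1,…,1)`, `(−1,0,…,0)`, …, `(0,…,0,−1)`. -/
theorem stmt_6 (n m : ℕ) :
    Nat.card {C : Set {x : Fin (n + 1) → Fin (m + 1) //
        ∀ i : Fin (n + 1), (i : ℕ) < n → x i ≤ x ⟨n, Nat.lt_succ_self n⟩} //
      IsMaxChain (· ≤ ·) C}
    = Nat.card {p : Fin ((n + 1) * m + 1) → (Fin n → Fin (m + 1)) //
        (∀ i, p ⟨0, Nat.succ_pos _⟩ i = 0) ∧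
        (∀ i, p ⟨(n + 1) * m, Nat.lt_succ_self _⟩ i = 0) ∧
        (∀ (t : ℕ) (h : t < (n + 1) * m),
          (∀ i, ((p ⟨t + 1, Nat.succ_lt_succ h⟩ i : ℕ)
              = (p ⟨t, Nat.lt_succ_of_lt h⟩ i : ℕ) + 1)) ∨
          (∃ i₀, ((p ⟨t + 1, Nat.succ_lt_succ h⟩ i₀ : ℕ) + 1
              = (p ⟨t, Nat.lt_succ_of_lt h⟩ i₀ : ℕ)) ∧
            ∀ i, i ≠ i₀ →
              p ⟨t + 1, Nat.succ_lt_succ h⟩ i = p ⟨t, Nat.lt_succ_of_lt h⟩ i))} :=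
  Nat.card_congr <| (Flag.equivIsMaxChain (α := CubeStack n m)).symm.trans <|
    (Flag.equivGradedFin CubeStack.grade_top).trans <| CubeStack.gradedFinEquivWalk.trans <|
      Equiv.subtypeEquivRight fun _ => and_congr funext_iff <| and_congr funext_iff Fin.forall_iff
end

section
/- Let M : ℕ → Type be a family of distributive lattices, and f : ∀ i, M i → M (i+1) a family of maps each of which preserves binary joins and is order-reflecting with down-closed image (a 'lattice series'). Let L n be the concrete lax sum of M 0 → ... → M n (pairs (j, x) with (j, x) ≤ (l, y) iff j ≤ l and F_{j,l}(x) ≤ y, F_{j,l} the composite of the f's). Then there exists a distributive lattice structure on L n (a DistribLattice instance) whose underlying order is the lax-sum order; i.e., L n, with joins (x, j) ⊔ (y, l) = (F_{j,l}(x) ⊔ y, l) and meets (x, j) ⊓ (y, l) = (z', j) where F_{j,l}(z') = F_{j,l}(x) ⊓ y (for j ≤ l), is a distributive lattice. -/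
/-- The composite `F_{j,l} = f_{l-1} ∘ ⋯ ∘ f_j : M j → M l` (identity when `j = l`). -/
def laxF {M : ℕ → Type} (f : ∀ i, M i → M (i + 1)) (j : ℕ) (x : M j) :
    ∀ l, j ≤ l → M l
  | 0, h => (Nat.le_zero.mp h) ▸ x
  | l + 1, h =>
    if he : j = l + 1 then he ▸ x
    else f l (laxF f j x l (Nat.lt_succ_iff.mp (lt_of_le_of_ne h he)))

/-- The concrete lax sum of the sequence `M 0 → M 1 → ⋯ → M n`:
pairs `(j, x)` with `j ∈ Fin (n+1)` and `x ∈ M j`. -/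
abbrev LaxSum (M : ℕ → Type) (n : ℕ) : Type := Σ j : Fin (n + 1), M (j : ℕ)

/-- The lax sum order: `(j, x) ≤ (l, y)` iff `j ≤ l` and `F_{j,l}(x) ≤ y`. -/
def laxLE {M : ℕ → Type} [∀ i, PartialOrder (M i)] (f : ∀ i, M i → M (i + 1)) {n : ℕ}
    (a b : LaxSum M n) : Prop :=
  ∃ h : (a.1 : ℕ) ≤ (b.1 : ℕ), laxF f (a.1 : ℕ) a.2 (b.1 : ℕ) h ≤ b.2

/-- The canonical map `f'_n : L n → L (n+1)`, `(j, x) ↦ (j, x)`. -/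
def stepMap {M : ℕ → Type} {n : ℕ} (a : LaxSum M n) : LaxSum M (n + 1) :=
  ⟨⟨(a.1 : ℕ), Nat.lt_succ_of_lt a.1.isLt⟩, a.2⟩

/-- The canonical map `ι_j : M j → L n`, `x ↦ (j, x)`, for `j ≤ n`. -/
def laxIota {M : ℕ → Type} {n : ℕ} (j : ℕ) (h : j ≤ n) (x : M j) : LaxSum M n :=
  ⟨⟨j, Nat.lt_succ_of_le h⟩, x⟩

/-!
The lax sum `L n` embeds into the distributive lattice `Fin (n + 1) × M n` by
`(j, x) ↦ (j, F_{j,n} x)`. Each `F_{j,l}` is again join-preserving, order-reflecting and has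
down-closed image, hence also preserves meets; so the embedding is order-reflecting and carries the
proposed joins and meets to the componentwise ones, and distributivity is pulled back along it.
-/

structure IsLatticeSeriesMap {α β : Type*} [Lattice α] [Lattice β] (g : α → β) : Prop where
  map_sup : ∀ x y, g (x ⊔ y) = g x ⊔ g y
  le_of_map_le : ∀ {a b}, g a ≤ g b → a ≤ b
  isLowerSet_range : IsLowerSet (Set.range g)

namespace IsLatticeSeriesMap

variable {α β γ : Type*} [Lattice α] [Lattice β] [Lattice γ]

protected theorem id : IsLatticeSeriesMap (fun x : α => x) where
  map_sup _ _ := rfl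
  le_of_map_le := id
  isLowerSet_range := by simpa only [Set.range_id'] using isLowerSet_univ

theorem comp {g : β → γ} {h : α → β} (hg : IsLatticeSeriesMap g) (hh : IsLatticeSeriesMap h) :
    IsLatticeSeriesMap (g ∘ h) where
  map_sup x y := by simp only [Function.comp_apply, hh.map_sup, hg.map_sup]
  le_of_map_le hle := hh.le_of_map_le (hg.le_of_map_le hle)
  isLowerSet_range := by
    rintro _ c hc ⟨x, rfl⟩
    obtain ⟨w, rfl⟩ := hg.isLowerSet_range hc ⟨h x, rfl⟩
    obtain ⟨z, rfl⟩ := hh.isLowerSet_range (hg.le_of_map_le hc) ⟨x, rfl⟩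
    exact ⟨z, rfl⟩

variable {g : α → β} (hg : IsLatticeSeriesMap g)
include hg

theorem monotone : Monotone g := fun a b hab =>
  calc g a ≤ g a ⊔ g b := le_sup_left
    _ = g b := by rw [← hg.map_sup, sup_eq_right.mpr hab]

theorem injective : Function.Injective g := fun _ _ hab =>
  le_antisymm (hg.le_of_map_le hab.le) (hg.le_of_map_le hab.ge)

theorem map_inf (x y : α) : g (x ⊓ y) = g x ⊓ g y := by
  refine le_antisymm (le_inf (hg.monotone inf_le_left) (hg.monotone inf_le_right)) ?_
  obtain ⟨z, hz⟩ := hg.isLowerSet_range (inf_le_left : g x ⊓ g y ≤ g x) ⟨x, rfl⟩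
  have hzx : z ≤ x := hg.le_of_map_le (hz ▸ inf_le_left)
  have hzy : z ≤ y := hg.le_of_map_le (hz ▸ inf_le_right)
  exact hz ▸ hg.monotone (le_inf hzx hzy)

noncomputable def infPullback (x : α) (y : β) : α :=
  (hg.isLowerSet_range (inf_le_left : g x ⊓ y ≤ g x) ⟨x, rfl⟩).choose

theorem map_infPullback (x : α) (y : β) : g (hg.infPullback x y) = g x ⊓ y :=
  (hg.isLowerSet_range (inf_le_left : g x ⊓ y ≤ g x) ⟨x, rfl⟩).choose_spec

end IsLatticeSeriesMap

section laxF

variable {M : ℕ → Type} {f : ∀ i, M i → M (i + 1)}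

theorem laxF_self (j : ℕ) (x : M j) (h : j ≤ j) : laxF f j x j h = x := by
  cases j <;> simp [laxF]

theorem laxF_succ {j l : ℕ} (hjl : j ≤ l) (x : M j) (h : j ≤ l + 1) :
    laxF f j x (l + 1) h = f l (laxF f j x l hjl) := by
  rw [laxF, dif_neg (by omega)]

theorem laxF_laxF {j l : ℕ} (hjl : j ≤ l) (x : M j) (m : ℕ) (hlm : l ≤ m) :
    laxF f l (laxF f j x l hjl) m hlm = laxF f j x m (hjl.trans hlm) := by
  induction m, hlm using Nat.le_induction with
  | base => rw [laxF_self]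
  | succ m hlm ih => rw [laxF_succ hlm, laxF_succ (hjl.trans hlm), ih]

theorem isLatticeSeriesMap_laxF [∀ i, Lattice (M i)] (hf : ∀ i, IsLatticeSeriesMap (f i))
    (j l : ℕ) (h : j ≤ l) : IsLatticeSeriesMap (fun x => laxF f j x l h) := by
  induction l, h using Nat.le_induction with
  | base => simpa only [laxF_self] using IsLatticeSeriesMap.id (α := M j)
  | succ l hjl ih =>
    simp only [laxF_succ hjl]
    exact (hf l).comp ih

end laxF

namespace LaxSum

variable {M : ℕ → Type} [∀ i, Lattice (M i)] {f : ∀ i, M i → M (i + 1)} {n : ℕ}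

def toProd (f : ∀ i, M i → M (i + 1)) (a : LaxSum M n) : Fin (n + 1) × M n :=
  (a.1, laxF f a.1 a.2 n a.1.is_le)

theorem toProd_le_toProd_iff (hf : ∀ i, IsLatticeSeriesMap (f i)) (a b : LaxSum M n) :
    toProd f a ≤ toProd f b ↔ laxLE f a b := by
  have hb := isLatticeSeriesMap_laxF hf b.1 n b.1.is_le
  constructor
  · intro hle
    have hab : (a.1 : ℕ) ≤ b.1 := hle.1
    refine ⟨hab, hb.le_of_map_le ?_⟩
    simpa only [toProd, laxF_laxF] using hle.2
  · rintro ⟨hab, hle⟩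
    refine ⟨hab, ?_⟩
    simpa only [toProd, laxF_laxF] using hb.monotone hle

theorem toProd_injective (hf : ∀ i, IsLatticeSeriesMap (f i)) :
    Function.Injective (toProd f : LaxSum M n → _) := by
  rintro ⟨j, x⟩ ⟨l, y⟩ hab
  obtain ⟨hjl, hxy⟩ := Prod.ext_iff.mp hab
  dsimp only [toProd] at hjl hxy
  subst hjl
  rw [(isLatticeSeriesMap_laxF hf j n j.is_le).injective hxy]

def supOfLE (f : ∀ i, M i → M (i + 1)) (a b : LaxSum M n) (h : (a.1 : ℕ) ≤ b.1) : LaxSum M n :=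
  ⟨b.1, laxF f a.1 a.2 b.1 h ⊔ b.2⟩

def sup (f : ∀ i, M i → M (i + 1)) (a b : LaxSum M n) : LaxSum M n :=
  if h : (a.1 : ℕ) ≤ b.1 then supOfLE f a b h else supOfLE f b a (by omega)

noncomputable def infOfLE (hf : ∀ i, IsLatticeSeriesMap (f i)) (a b : LaxSum M n)
    (h : (a.1 : ℕ) ≤ b.1) : LaxSum M n :=
  ⟨a.1, (isLatticeSeriesMap_laxF hf a.1 b.1 h).infPullback a.2 b.2⟩

noncomputable def inf (hf : ∀ i, IsLatticeSeriesMap (f i)) (a b : LaxSum M n) : LaxSum M n :=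
  if h : (a.1 : ℕ) ≤ b.1 then infOfLE hf a b h else infOfLE hf b a (by omega)

theorem toProd_supOfLE (hf : ∀ i, IsLatticeSeriesMap (f i)) (a b : LaxSum M n)
    (h : (a.1 : ℕ) ≤ b.1) : toProd f (supOfLE f a b h) = toProd f a ⊔ toProd f b := by
  refine Prod.ext (sup_eq_right.mpr (Fin.le_def.mpr h)).symm ?_
  simp only [toProd, supOfLE, Prod.snd_sup, (isLatticeSeriesMap_laxF hf b.1 n b.1.is_le).map_sup,
    laxF_laxF]

theorem toProd_infOfLE (hf : ∀ i, IsLatticeSeriesMap (f i)) (a b : LaxSum M n)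
    (h : (a.1 : ℕ) ≤ b.1) : toProd f (infOfLE hf a b h) = toProd f a ⊓ toProd f b := by
  refine Prod.ext (inf_eq_left.mpr (Fin.le_def.mpr h)).symm ?_
  have hb := isLatticeSeriesMap_laxF hf b.1 n b.1.is_le
  dsimp only [toProd, infOfLE, Prod.snd_inf]
  rw [← laxF_laxF h _ n b.1.is_le, (isLatticeSeriesMap_laxF hf a.1 b.1 h).map_infPullback,
    hb.map_inf, laxF_laxF]

theorem toProd_sup (hf : ∀ i, IsLatticeSeriesMap (f i)) (a b : LaxSum M n) :
    toProd f (sup f a b) = toProd f a ⊔ toProd f b := by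
  unfold sup
  split_ifs with h
  · exact toProd_supOfLE hf a b h
  · rw [toProd_supOfLE hf b a, sup_comm]

theorem toProd_inf (hf : ∀ i, IsLatticeSeriesMap (f i)) (a b : LaxSum M n) :
    toProd f (inf hf a b) = toProd f a ⊓ toProd f b := by
  unfold inf
  split_ifs with h
  · exact toProd_infOfLE hf a b h
  · rw [toProd_infOfLE hf b a, inf_comm]

end LaxSum

/-- For a lattice series of distributive lattices (maps preserving binary joins,
order-reflecting, with down-closed image), the concrete lax sum `L n` carries a
distributive lattice structure whose order is the lax sum order, with joins
`(j, x) ⊔ (l, y) = (l, F_{j,l}(x) ⊔ y)` and meets `(j, x) ⊓ (l, y) = (j, z')` where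
`F_{j,l}(z') = F_{j,l}(x) ⊓ y` (for `j ≤ l`). -/
theorem stmt_16 (M : ℕ → Type) [∀ i, DistribLattice (M i)] (f : ∀ i, M i → M (i + 1))
    (hfj : ∀ i (x y : M i), f i (x ⊔ y) = f i x ⊔ f i y)
    (hrefl : ∀ i (a b : M i), f i a ≤ f i b → a ≤ b)
    (hdc : ∀ i (y : M (i + 1)) (x : M i), y ≤ f i x → ∃ z : M i, f i z = y)
    (n : ℕ) :
    ∃ inst : DistribLattice (LaxSum M n),
      (∀ a b : LaxSum M n, inst.le a b ↔ laxLE f a b) ∧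
      (∀ (j l : Fin (n + 1)) (h : (j : ℕ) ≤ (l : ℕ)) (x : M (j : ℕ)) (y : M (l : ℕ)),
          inst.sup ⟨j, x⟩ ⟨l, y⟩ = (⟨l, laxF f (j : ℕ) x (l : ℕ) h ⊔ y⟩ : LaxSum M n)) ∧
      (∀ (j l : Fin (n + 1)) (h : (j : ℕ) ≤ (l : ℕ)) (x : M (j : ℕ)) (y : M (l : ℕ))
          (z' : M (j : ℕ)), laxF f (j : ℕ) z' (l : ℕ) h = laxF f (j : ℕ) x (l : ℕ) h ⊓ y →
          inst.inf ⟨j, x⟩ ⟨l, y⟩ = (⟨j, z'⟩ : LaxSum M n)) := by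
  have hf : ∀ i, IsLatticeSeriesMap (f i) := fun i =>
    ⟨hfj i, hrefl i _ _, fun _ _ hle ⟨x, hx⟩ => hdc i _ x (hx ▸ hle)⟩
  let _ : Max (LaxSum M n) := ⟨LaxSum.sup f⟩
  let _ : Min (LaxSum M n) := ⟨LaxSum.inf hf⟩
  let _ : LE (LaxSum M n) := ⟨laxLE f⟩
  let _ : LT (LaxSum M n) := ⟨fun a b => LaxSum.toProd f a < LaxSum.toProd f b⟩
  refine ⟨(LaxSum.toProd_injective hf).distribLattice _
      (LaxSum.toProd_le_toProd_iff hf _ _) Iff.rfl (LaxSum.toProd_sup hf) (LaxSum.toProd_inf hf),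
    fun _ _ => Iff.rfl, fun j l h x y => dif_pos h, fun j l h x y z' hz' => ?_⟩
  have hF := isLatticeSeriesMap_laxF hf j l h
  show LaxSum.inf hf ⟨j, x⟩ ⟨l, y⟩ = ⟨j, z'⟩
  rw [LaxSum.inf, dif_pos h, LaxSum.infOfLE, hF.injective ((hF.map_infPullback x y).trans hz'.symm)]
end
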